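/- If X is Weibull distributed with shape α > 0 and scale β > 0, then E[log X] = log β + ψ(1)/α, where ψ is the digamma function (ψ(1) = −γ, the negative Euler–Mascheroni constant). -/

import Mathlib

open MeasureTheory ProbabilityTheory Real

/-- CDF of the Weibull distribution with shape `α` and scale `β`. -/
noncomputable def weibullCDF (α β x : ℝ) : ℝ :=
  if x ≤ 0 then 0 else 1 - Real.exp (-(x / β) ^ α)

/-- `X` is Weibull(α, β)-distributed under `μ`. -/
def IsWeibull {Ω : Type*} [MeasurableSpace Ω] (μ : Measure Ω) (X : Ω → ℝ)
    (α β : ℝ) : Prop :=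
  ∀ x : ℝ, μ {ω | X ω ≤ x} = ENNReal.ofReal (weibullCDF α β x)

/-!
If `E` has the standard exponential law, then `β * E ^ (1 / α)` has distribution function
`1 - exp (-(x / β) ^ α)`, so `X` has the law of `β * E ^ (1 / α)` and
`𝔼[log X] = log β + 𝔼[log E] / α`. Finally `𝔼[log E] = ∫ log t * exp (-t) = Γ'(1) = -γ`,
by differentiating the Mellin transform `Γ(s) = ∫ t ^ (s - 1) * exp (-t)` under the integral sign.
-/

open Set Asymptotics

lemma mellin_hasDerivAt_exp_neg_one :
    MellinConvergent (fun t : ℝ => log t • (exp (-t) : ℂ)) 1 ∧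
      HasDerivAt (mellin fun t : ℝ => (exp (-t) : ℂ))
        (mellin (fun t : ℝ => log t • (exp (-t) : ℂ)) 1) 1 := by
  have hcont : Continuous fun t : ℝ => (exp (-t) : ℂ) := by fun_prop
  refine mellin_hasDerivAt_of_isBigO_rpow (a := 2) (b := 0)
    (hcont.continuousOn.locallyIntegrableOn measurableSet_Ioi) ?_ (by norm_num) ?_ (by norm_num)
  · rw [← isBigO_norm_left]
    simp_rw [Complex.norm_real, isBigO_norm_left]
    simpa only [neg_one_mul] using (isLittleO_exp_neg_mul_rpow_atTop zero_lt_one _).isBigO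
  · simp_rw [neg_zero, rpow_zero]
    exact isBigO_const_of_tendsto ((hcont.tendsto' 0 1 (by simp)).mono_left nhdsWithin_le_nhds)
      one_ne_zero

lemma mellin_one_ofReal (f : ℝ → ℝ) :
    mellin (fun t => (f t : ℂ)) 1 = ((∫ t in Ioi 0, f t : ℝ) : ℂ) := by
  simpa [mellin] using integral_complex_ofReal

lemma integrableOn_log_mul_exp_neg : IntegrableOn (fun t => log t * exp (-t)) (Ioi 0) := by
  have h := mellin_hasDerivAt_exp_neg_one.1
  simp only [MellinConvergent, sub_self, Complex.cpow_zero, one_smul, Complex.real_smul] at h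
  exact_mod_cast h.re

lemma integral_log_mul_exp_neg : ∫ t in Ioi 0, log t * exp (-t) = -eulerMascheroniConstant := by
  obtain ⟨-, hderiv⟩ := mellin_hasDerivAt_exp_neg_one
  have hGamma : HasDerivAt Complex.Gamma (mellin (fun t : ℝ => log t • (exp (-t) : ℂ)) 1) 1 := by
    rw [← Complex.GammaIntegral_eq_mellin] at hderiv
    refine hderiv.congr_of_eventuallyEq ?_
    filter_upwards [(Complex.continuous_re.isOpen_preimage _ isOpen_Ioi).mem_nhds
      (by simp : (1 : ℂ) ∈ Complex.re ⁻¹' Ioi 0)] with s hs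
    exact Complex.Gamma_eq_integral hs
  have h := hGamma.unique Complex.hasDerivAt_Gamma_one
  simp only [Complex.real_smul, ← Complex.ofReal_mul, mellin_one_ofReal] at h
  exact_mod_cast h

instance : IsProbabilityMeasure (expMeasure 1) := isProbabilityMeasure_expMeasure one_pos

lemma expMeasure_one_eq_withDensity :
    expMeasure 1 = (volume.restrict (Ioi 0)).withDensity fun t => ENNReal.ofReal (exp (-t)) := by
  rw [← withDensity_indicator measurableSet_Ioi, expMeasure, gammaMeasure]
  refine withDensity_congr_ae ?_
  filter_upwards [Measure.ae_ne volume 0] with t ht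
  rcases ht.lt_or_gt with ht | ht
  · simp [gammaPDF_of_neg ht, ht.not_gt]
  · simp [gammaPDF_of_nonneg ht.le, ht]

section

variable {E : Type*} [NormedAddCommGroup E] [NormedSpace ℝ E]

lemma integrable_expMeasure_one_iff {g : ℝ → E} :
    Integrable g (expMeasure 1) ↔ IntegrableOn (fun t => exp (-t) • g t) (Ioi 0) := by
  rw [expMeasure_one_eq_withDensity, integrable_withDensity_iff_integrable_smul' (by fun_prop)
    (ae_of_all _ fun _ => ENNReal.ofReal_lt_top)]
  simp only [ENNReal.toReal_ofReal (exp_pos _).le, IntegrableOn]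

lemma integral_expMeasure_one (g : ℝ → E) :
    ∫ t, g t ∂expMeasure 1 = ∫ t in Ioi 0, exp (-t) • g t := by
  rw [expMeasure_one_eq_withDensity, integral_withDensity_eq_integral_toReal_smul (by fun_prop)
    (ae_of_all _ fun _ => ENNReal.ofReal_lt_top)]
  simp only [ENNReal.toReal_ofReal (exp_pos _).le]

end

lemma ae_pos_expMeasure_one : ∀ᵐ t ∂expMeasure 1, 0 < t := by
  rw [expMeasure_one_eq_withDensity]
  exact (withDensity_absolutelyContinuous _ _).ae_le (ae_restrict_mem measurableSet_Ioi)

lemma integrable_log_expMeasure_one : Integrable log (expMeasure 1) := by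
  rw [integrable_expMeasure_one_iff]
  simpa only [smul_eq_mul, mul_comm] using integrableOn_log_mul_exp_neg

lemma integral_log_expMeasure_one : ∫ t, log t ∂expMeasure 1 = -eulerMascheroniConstant := by
  rw [integral_expMeasure_one, ← integral_log_mul_exp_neg]
  simp only [smul_eq_mul, mul_comm]

lemma map_expMeasure_one_Iic {α β : ℝ} (hα : 0 < α) (hβ : 0 < β) (x : ℝ) :
    (expMeasure 1).map (fun t => β * t ^ α⁻¹) (Iic x) = ENNReal.ofReal (weibullCDF α β x) := by
  rw [Measure.map_apply (by fun_prop) measurableSet_Iic, weibullCDF]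
  split_ifs with hx
  · rw [ENNReal.ofReal_zero, measure_eq_zero_iff_ae_notMem]
    filter_upwards [ae_pos_expMeasure_one] with t ht
    simpa using hx.trans_lt (by positivity)
  · rw [not_le] at hx
    -- `t ^ α⁻¹` is a junk value for `t < 0`, but that half-line is null for `expMeasure 1`.
    have hpreimage : (fun t => β * t ^ α⁻¹) ⁻¹' Iic x =ᵐ[expMeasure 1] Iic ((x / β) ^ α) := by
      filter_upwards [ae_pos_expMeasure_one] with t ht
      change (β * t ^ α⁻¹ ≤ x) = (t ≤ (x / β) ^ α)
      rw [eq_iff_iff, ← le_div_iff₀' hβ, rpow_inv_le_iff_of_pos ht.le (div_pos hx hβ).le hα]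
    rw [measure_congr hpreimage, ← ofReal_cdf, cdf_expMeasure_eq one_pos, if_pos (by positivity),
      one_mul]

lemma IsWeibull.hasLaw {Ω : Type*} [MeasurableSpace Ω] {μ : Measure Ω} [IsProbabilityMeasure μ]
    {X : Ω → ℝ} {α β : ℝ} (hα : 0 < α) (hβ : 0 < β) (hm : Measurable X) (hX : IsWeibull μ X α β) :
    HasLaw X ((expMeasure 1).map fun t => β * t ^ α⁻¹) μ where
  aemeasurable := hm.aemeasurable
  map_eq := by
    have := Measure.isProbabilityMeasure_map (μ := μ) hm.aemeasurable
    refine Measure.ext_of_Iic _ _ fun x => ?_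
    rw [Measure.map_apply hm measurableSet_Iic, map_expMeasure_one_Iic hα hβ]
    exact hX x

theorem weibull_mean_log {Ω : Type*} [MeasurableSpace Ω] (μ : Measure Ω)
    [IsProbabilityMeasure μ] (X : Ω → ℝ) (α β : ℝ) (hα : 0 < α) (hβ : 0 < β)
    (hm : Measurable X) (hX : IsWeibull μ X α β) :
    ∫ ω, Real.log (X ω) ∂μ = Real.log β + (-Real.eulerMascheroniConstant) / α := by
  have hlog : ∀ᵐ t ∂expMeasure 1, log (β * t ^ α⁻¹) = log β + α⁻¹ * log t := by
    filter_upwards [ae_pos_expMeasure_one] with t ht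
    rw [log_mul hβ.ne' (rpow_pos_of_pos ht _).ne', log_rpow ht]
  calc ∫ ω, log (X ω) ∂μ = ∫ t, log (β * t ^ α⁻¹) ∂expMeasure 1 := by
        rw [← Function.comp_def log X, (hX.hasLaw hα hβ hm).integral_comp
          measurable_log.aestronglyMeasurable, integral_map (by fun_prop)
          measurable_log.aestronglyMeasurable]
    _ = ∫ t, (log β + α⁻¹ * log t) ∂expMeasure 1 := integral_congr_ae hlog
    _ = log β + (-eulerMascheroniConstant) / α := by
        rw [integral_add (integrable_const _) (integrable_log_expMeasure_one.const_mul _),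
          integral_const, integral_const_mul, integral_log_expMeasure_one]
        simp [div_eq_inv_mul]
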